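/- Let C ⊆ ℝ^d be a bounded convex set, r, ε > 0, and let C_r denote the open r-neighborhood of C. Then the set C_r \ int(C) can be covered by a single generalized strip of width at most 2(r + ε); that is, there exists a polyhedral function f with Lipschitz constant at most r + ε such that C_r \ int(C) ⊆ S(f). -/

import Mathlib

open Set Metric RealInnerProductSpace

/-- A function is polyhedral if it is the maximum of finitely many affine functions. -/
def IsPolyhedral {d : ℕ} (g : EuclideanSpace ℝ (Fin d) → ℝ) : Prop :=
  ∃ (n : ℕ) (v : Fin (n + 1) → EuclideanSpace ℝ (Fin d)) (c : Fin (n + 1) → ℝ),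
    ∀ x, g x = Finset.univ.sup' Finset.univ_nonempty (fun i => ⟪v i, x⟫ + c i)

/-- `y` is a proximal point of `f` at `x`: it minimizes `z ↦ f z + ‖x - z‖² / 2`. -/
def IsProxPt {d : ℕ} (f : EuclideanSpace ℝ (Fin d) → ℝ)
    (x y : EuclideanSpace ℝ (Fin d)) : Prop :=
  ∀ z, f y + ‖x - y‖ ^ 2 / 2 ≤ f z + ‖x - z‖ ^ 2 / 2

/-- The generalized strip `S(f)`: points `x` such that `f` is not differentiable at
`prox_f(x)`. -/
def GStrip {d : ℕ} (f : EuclideanSpace ℝ (Fin d) → ℝ) : Set (EuclideanSpace ℝ (Fin d)) :=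
  {x | ∀ y, IsProxPt f x y → ¬ DifferentiableAt ℝ f y}

theorem aux_convex_interior_closure {E : Type*} [NormedAddCommGroup E] [NormedSpace ℝ E]
    [FiniteDimensional ℝ E] {s : Set E} (hs : Convex ℝ s) :
    interior (closure s) ⊆ interior s := by
  rcases Set.eq_empty_or_nonempty (interior s) with h | ⟨x0, hx0⟩
  · have h1 : closure s ⊆ (affineSpan ℝ s : Set E) :=
      closure_minimal (subset_affineSpan _ _) (affineSpan ℝ s).closed_of_finiteDimensional
    have h2 : affineSpan ℝ (closure s) ≤ affineSpan ℝ s := affineSpan_le.mpr h1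
    intro z hz
    exfalso
    have hne : (interior (closure s)).Nonempty := ⟨z, hz⟩
    have htop := (hs.closure.interior_nonempty_iff_affineSpan_eq_top).mp hne
    have htop2 : affineSpan ℝ s = ⊤ := top_le_iff.mp (htop ▸ h2)
    have := (hs.interior_nonempty_iff_affineSpan_eq_top).mpr htop2
    rw [h] at this
    exact Set.not_nonempty_empty this
  · intro z hz
    obtain ⟨δ, hδ, hball⟩ := Metric.mem_nhds_iff.mp (mem_interior_iff_mem_nhds.mp hz)
    set t : ℝ := δ / (2 * (‖z - x0‖ + 1)) with ht_def
    have ht : 0 < t := by positivity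
    have hy : z + t • (z - x0) ∈ closure s := by
      apply hball
      have : ‖t • (z - x0)‖ < δ := by
        rw [norm_smul, Real.norm_eq_abs, abs_of_pos ht, ht_def]
        rw [div_mul_eq_mul_div, div_lt_iff₀ (by positivity)]
        nlinarith [norm_nonneg (z - x0)]
      simpa [Metric.mem_ball, dist_eq_norm] using this
    have hseg := hs.openSegment_interior_closure_subset_interior hx0 hy
    apply hseg
    refine ⟨t / (1 + t), 1 / (1 + t), by positivity, by positivity, by field_simp; ring, ?_⟩
    match_scalars <;> (field_simp; try ring)

theorem aux_sup'_le_lip {E : Type*} [NormedAddCommGroup E] [InnerProductSpace ℝ E] {ι : Type*}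
    (s : Finset ι) (H : s.Nonempty) (v : ι → E) (c : ι → ℝ) (L : ℝ)
    (hv : ∀ i ∈ s, ‖v i‖ ≤ L) (x y : E) :
    s.sup' H (fun i => ⟪v i, x⟫ + c i) ≤ s.sup' H (fun i => ⟪v i, y⟫ + c i) + L * ‖x - y‖ := by
  obtain ⟨i, hi, hEq⟩ := Finset.exists_mem_eq_sup' H (fun i => ⟪v i, x⟫ + c i)
  rw [hEq]
  have h1 : ⟪v i, x⟫ - ⟪v i, y⟫ = ⟪v i, x - y⟫ := (inner_sub_right _ _ _).symm
  have h2 : ⟪v i, x - y⟫ ≤ ‖v i‖ * ‖x - y‖ := real_inner_le_norm _ _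
  have h3 := Finset.le_sup' (fun i => ⟪v i, y⟫ + c i) hi
  have h4 : ‖v i‖ * ‖x - y‖ ≤ L * ‖x - y‖ :=
    mul_le_mul_of_nonneg_right (hv i hi) (norm_nonneg _)
  linarith

theorem aux_quad_deriv {E : Type*} [NormedAddCommGroup E] [InnerProductSpace ℝ E] (x y : E) :
    HasFDerivAt (fun z : E => ‖x - z‖ ^ 2 / 2) (innerSL ℝ (y - x)) y := by
  have h1 : HasFDerivAt (fun z : E => x - z) (-(ContinuousLinearMap.id ℝ E)) y :=
    (hasFDerivAt_id y).const_sub x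
  have h2 := h1.norm_sq
  have h3 := h2.const_smul (R := ℝ) ((2:ℝ)⁻¹)
  have h4 : (fun z : E => ‖x - z‖ ^ 2 / 2) = (fun z : E => (2:ℝ)⁻¹ • ‖x - z‖ ^ 2) := by
    funext z; simp [smul_eq_mul]; ring
  rw [h4]
  refine h3.congr_fderiv ?_
  ext w
  simp [ContinuousLinearMap.smul_apply, real_inner_smul_left, inner_sub_left, inner_neg_right]


set_option maxHeartbeats 2000000 in
/-- For a bounded convex set `C ⊆ ℝ^d` and `r, ε > 0`, the set
`C_r \ int C` (where `C_r` is the open `r`-neighborhood of `C`) is contained in a single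
generalized strip `S(f)` with `f` polyhedral and `(r + ε)`-Lipschitz (so the strip has
width at most `2(r + ε)`). -/
theorem convex_neighborhood_cover (d : ℕ) (C : Set (EuclideanSpace ℝ (Fin d)))
    (hC : Convex ℝ C) (hCb : Bornology.IsBounded C) (r ε : ℝ) (hr : 0 < r) (hε : 0 < ε) :
    ∃ f : EuclideanSpace ℝ (Fin d) → ℝ, IsPolyhedral f ∧
      (∀ x y, |f x - f y| ≤ (r + ε) * ‖x - y‖) ∧
      thickening r C \ interior C ⊆ GStrip f := by
  classical
  by_cases hS : thickening r C \ interior C = ∅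
  · refine ⟨fun _ => 0, ⟨0, fun _ => 0, fun _ => 0, fun x => ?_⟩, fun x y => ?_, by simp [hS]⟩
    · simp [Finset.sup'_const]
    · simp only [sub_self, abs_zero]
      exact mul_nonneg (by linarith) (norm_nonneg _)
  obtain ⟨x0, hx0⟩ : (thickening r C \ interior C).Nonempty := Set.nonempty_iff_ne_empty.mpr hS
  obtain ⟨c00, hc00C, _⟩ := mem_thickening_iff.mp hx0.1
  have hK : IsCompact (closure C) := hCb.isCompact_closure
  have hKconv : Convex ℝ (closure C) := hC.closure
  have hKne : (closure C).Nonempty := ⟨c00, subset_closure hc00C⟩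
  obtain ⟨R0, hR0⟩ := hCb.closure.subset_closedBall 0
  set R := max R0 0 with hRdef
  have hR : 0 ≤ R := le_max_right _ _
  have hRK : ∀ a ∈ closure C, ‖a‖ ≤ R := by
    intro a ha
    have := hR0 ha
    rw [mem_closedBall_zero_iff] at this
    exact this.trans (le_max_left _ _)
  set L := r + ε with hLdef
  have hL : 0 < L := by rw [hLdef]; linarith
  set η := ε / 4 with hηdef
  have hη : 0 < η := by rw [hηdef]; linarith
  set δ := η / (4 * (2 * R + r + 1)) with hδdef
  have hδ : 0 < δ := by rw [hδdef]; exact div_pos hη (by linarith)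
  -- support function of closure C
  set sf : EuclideanSpace ℝ (Fin d) → ℝ := fun u => sSup ((fun a => ⟪u, a⟫) '' closure C)
    with hsfdef
  have hbdd : ∀ u, BddAbove ((fun a : EuclideanSpace ℝ (Fin d) => ⟪u, a⟫) '' closure C) :=
    fun u => (hK.image (continuous_const.inner continuous_id)).bddAbove
  have hsf_ub : ∀ u, ∀ a ∈ closure C, ⟪u, a⟫ ≤ sf u :=
    fun u a ha => le_csSup (hbdd u) ⟨a, ha, rfl⟩
  have hsf_le : ∀ (u : EuclideanSpace ℝ (Fin d)) (b : ℝ),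
      (∀ a ∈ closure C, ⟪u, a⟫ ≤ b) → sf u ≤ b := by
    intro u b hb
    exact csSup_le (hKne.image _) (by rintro _ ⟨a, ha, rfl⟩; exact hb a ha)
  have hsf_lip : ∀ u u' : EuclideanSpace ℝ (Fin d), sf u ≤ sf u' + R * ‖u - u'‖ := by
    intro u u'
    apply hsf_le
    intro a ha
    have h1 : ⟪u, a⟫ - ⟪u', a⟫ = ⟪u - u', a⟫ := (inner_sub_left _ _ _).symm
    have h2 : ⟪u - u', a⟫ ≤ ‖u - u'‖ * ‖a‖ := real_inner_le_norm _ _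
    have h3 : ‖u - u'‖ * ‖a‖ ≤ ‖u - u'‖ * R :=
      mul_le_mul_of_nonneg_left (hRK a ha) (norm_nonneg _)
    have h4 := hsf_ub u' a ha
    nlinarith [norm_nonneg (u - u')]
  -- separation
  have hsep : ∀ x' : EuclideanSpace ℝ (Fin d), x' ∉ closure C →
      ∃ u : EuclideanSpace ℝ (Fin d), ‖u‖ = 1 ∧ ∀ a ∈ closure C, ⟪u, a⟫ ≤ ⟪u, x'⟫ := by
    intro x' hx'
    obtain ⟨φ, s0, hφK, hφx⟩ := geometric_hahn_banach_closed_point hKconv isClosed_closure hx'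
    set v0 := (InnerProductSpace.toDual ℝ _).symm φ with hv0def
    have hv0 : ∀ w, ⟪v0, w⟫ = φ w := fun w => InnerProductSpace.toDual_symm_apply
    have hv0ne : v0 ≠ 0 := by
      intro h0
      obtain ⟨a, ha⟩ := hKne
      have h1 := hφK a ha
      have h2 : φ a = 0 := by rw [← hv0, h0, inner_zero_left]
      have h3 : φ x' = 0 := by rw [← hv0, h0, inner_zero_left]
      rw [h2] at h1; rw [h3] at hφx; linarith
    refine ⟨‖v0‖⁻¹ • v0, ?_, ?_⟩
    · rw [norm_smul, Real.norm_eq_abs, abs_of_nonneg (inv_nonneg.mpr (norm_nonneg _)),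
        inv_mul_cancel₀ (norm_ne_zero_iff.mpr hv0ne)]
    · intro a ha
      rw [real_inner_smul_left, real_inner_smul_left, hv0, hv0]
      exact mul_le_mul_of_nonneg_left ((hφK a ha).trans hφx).le (inv_nonneg.mpr (norm_nonneg _))
  have hIntK : interior (closure C) ⊆ interior C := aux_convex_interior_closure hC
  have hshell_sep : ∀ x ∈ thickening r C \ interior C,
      ∃ u : EuclideanSpace ℝ (Fin d), ‖u‖ = 1 ∧ sf u ≤ ⟪u, x⟫ + η / 4 := by
    intro x hx
    have hxK : x ∈ closure (closure C)ᶜ := by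
      rw [closure_compl]
      exact fun hxk => hx.2 (hIntK hxk)
    obtain ⟨x', hx'K, hdist⟩ := Metric.mem_closure_iff.mp hxK (η / 4) (by linarith)
    obtain ⟨u, hu1, huK⟩ := hsep x' hx'K
    refine ⟨u, hu1, ?_⟩
    have h1 : sf u ≤ ⟪u, x'⟫ := hsf_le u _ huK
    have h2 : ⟪u, x'⟫ - ⟪u, x⟫ = ⟪u, x' - x⟫ := (inner_sub_right _ _ _).symm
    have h3 : ⟪u, x' - x⟫ ≤ ‖u‖ * ‖x' - x‖ := real_inner_le_norm _ _
    have h4 : ‖x' - x‖ < η / 4 := by rw [← dist_eq_norm, dist_comm]; exact hdist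
    rw [hu1] at h3
    linarith
  -- the net
  obtain ⟨T, hTsub, hTfin, hTcover⟩ :=
    (isCompact_sphere (0 : EuclideanSpace ℝ (Fin d)) 1).finite_cover_balls hδ
  set S := hTfin.toFinset with hSdef
  have hSsph : ∀ s ∈ S, ‖s‖ = 1 := by
    intro s hs
    have := hTsub (hTfin.mem_toFinset.mp hs)
    rwa [mem_sphere_zero_iff_norm] at this
  have hcoverS : ∀ w : EuclideanSpace ℝ (Fin d), ‖w‖ = 1 → ∃ s ∈ S, ‖w - s‖ < δ := by
    intro w hw
    have hmem : w ∈ sphere (0 : EuclideanSpace ℝ (Fin d)) 1 := by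
      rwa [mem_sphere_zero_iff_norm]
    have := hTcover hmem
    rw [mem_iUnion₂] at this
    obtain ⟨s, hsT, hball⟩ := this
    exact ⟨s, hTfin.mem_toFinset.mpr hsT, by rwa [mem_ball, dist_eq_norm] at hball⟩
  have hSne : S.Nonempty := by
    obtain ⟨u1, hu11, _⟩ := hshell_sep x0 hx0
    obtain ⟨s, hs, _⟩ := hcoverS u1 hu11
    exact ⟨s, hs⟩
  set m := S.card with hmdef
  have hm : 0 < m := Finset.card_pos.mpr hSne
  haveI : Nonempty (Fin m) := Fin.pos_iff_nonempty.mp hm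
  have hul : S.toList.length = m := Finset.length_toList S
  set u : Fin m → EuclideanSpace ℝ (Fin d) := fun j => S.toList.get (Fin.cast hul.symm j)
    with hudef
  have huS : ∀ j, u j ∈ S := fun j => Finset.mem_toList.mp (List.get_mem _ _)
  have hunit : ∀ j, ‖u j‖ = 1 := fun j => hSsph _ (huS j)
  have hcover : ∀ w : EuclideanSpace ℝ (Fin d), ‖w‖ = 1 → ∃ j, ‖w - u j‖ < δ := by
    intro w hw
    obtain ⟨s, hsS, hlt⟩ := hcoverS w hw
    obtain ⟨n, hn⟩ := List.mem_iff_get.mp (Finset.mem_toList.mpr hsS)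
    refine ⟨Fin.cast hul n, ?_⟩
    have hcc : u (Fin.cast hul n) = s := by
      rw [hudef]
      exact hn
    rw [hcc]; exact hlt
  -- the polyhedral function
  set q : Fin m → EuclideanSpace ℝ (Fin d) → ℝ :=
    fun j z => ⟪L • u j, z⟫ + L * (η - sf (u j)) with hqdef
  set G : EuclideanSpace ℝ (Fin d) → ℝ :=
    fun z => Finset.univ.sup' Finset.univ_nonempty (fun j => q j z) with hGdef
  set f : EuclideanSpace ℝ (Fin d) → ℝ := fun z => max (G z) 0 with hfdef
  have hnormv : ∀ j, ‖L • u j‖ = L := by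
    intro j
    rw [norm_smul, Real.norm_eq_abs, abs_of_pos hL, hunit, mul_one]
  have hpG : ∀ j z, q j z ≤ G z := fun j z => Finset.le_sup' (fun j => q j z) (Finset.mem_univ j)
  have hGp : ∀ z, ∃ j, G z = q j z := by
    intro z
    obtain ⟨j, _, hj⟩ := Finset.exists_mem_eq_sup' Finset.univ_nonempty (fun j => q j z)
    exact ⟨j, hj⟩
  have hGf : ∀ z, G z ≤ f z := fun z => le_max_left _ _
  have hf0 : ∀ z, 0 ≤ f z := fun z => le_max_right _ _
  have hqmul : ∀ j z, q j z = L * (⟪u j, z⟫ + (η - sf (u j))) := by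
    intro j z
    rw [hqdef]
    simp only [real_inner_smul_left]
    ring
  have hLipG' : ∀ x y, G x ≤ G y + L * ‖x - y‖ := by
    intro x y
    simp only [hGdef, hqdef]
    exact aux_sup'_le_lip _ Finset.univ_nonempty _ _ L (fun i _ => (hnormv i).le) x y
  have hLipf : ∀ x y : EuclideanSpace ℝ (Fin d), |f x - f y| ≤ L * ‖x - y‖ := by
    intro x y
    have h1 : |f x - f y| ≤ |G x - G y| := by
      simp only [hfdef]
      exact abs_max_sub_max_le_abs _ _ _
    have h2 : |G x - G y| ≤ L * ‖x - y‖ := by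
      rw [abs_sub_le_iff]
      constructor
      · linarith [hLipG' x y]
      · have := hLipG' y x
        rw [norm_sub_rev] at this
        linarith
    exact h1.trans h2
  have hfC : ∀ a ∈ C, f a ≤ L * η := by
    intro a haC
    have hGa : G a ≤ L * η := by
      simp only [hGdef]
      apply Finset.sup'_le
      intro j _
      rw [show q j a = L * (⟪u j, a⟫ + (η - sf (u j))) from hqmul j a] at *
      have := hsf_ub (u j) a (subset_closure haC)
      nlinarith [hL.le]
    simp only [hfdef]
    exact max_le hGa (mul_nonneg hL.le hη.le)
  have hGshell : ∀ x ∈ thickening r C \ interior C, 0 ≤ G x := by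
    intro x hx
    obtain ⟨u0, hu01, hu0⟩ := hshell_sep x hx
    obtain ⟨j, hj⟩ := hcover u0 hu01
    obtain ⟨cx, hcxC, hcxd⟩ := mem_thickening_iff.mp hx.1
    have hxnorm : ‖x‖ ≤ R + r := by
      have h0 : x - cx + cx = x := by abel
      have h1 := norm_add_le (x - cx) cx
      rw [h0] at h1
      have h2 : ‖cx‖ ≤ R := hRK cx (subset_closure hcxC)
      have h3 : ‖x - cx‖ < r := by rwa [← dist_eq_norm]
      linarith
    have e1 : ⟪u0, x⟫ - ⟪u j, x⟫ ≤ δ * ‖x‖ := by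
      have hcs := real_inner_le_norm (u0 - u j) x
      rw [inner_sub_left] at hcs
      nlinarith [norm_nonneg x, norm_nonneg (u0 - u j), hj]
    have e2 : sf (u j) ≤ sf u0 + R * δ := by
      have hlip := hsf_lip (u j) u0
      have h5 : ‖u j - u0‖ < δ := by rw [norm_sub_rev]; exact hj
      nlinarith [hR]
    have e3 : sf u0 ≤ ⟪u0, x⟫ + η / 4 := hu0
    have e4 : δ * (2 * R + r) ≤ η / 4 := by
      rw [hδdef, div_mul_eq_mul_div, div_le_div_iff₀ (by linarith) (by norm_num)]
      nlinarith [hη.le, hR, hr.le]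
    have e5 : δ * ‖x‖ ≤ δ * (R + r) := mul_le_mul_of_nonneg_left hxnorm hδ.le
    have hqjx : 0 ≤ q j x := by
      rw [hqmul]
      apply mul_nonneg hL.le
      nlinarith [hδ.le]
    exact le_trans hqjx (hpG j x)
  refine ⟨f, ?_, fun x y => hLipf x y, ?_⟩
  · -- IsPolyhedral
    set vv : Fin (m+1) → EuclideanSpace ℝ (Fin d) :=
      fun i => if hi : (i : ℕ) < m then L • u ⟨i, hi⟩ else 0 with hvvdef
    set cc : Fin (m+1) → ℝ :=
      fun i => if hi : (i : ℕ) < m then L * (η - sf (u ⟨i, hi⟩)) else 0 with hccdef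
    refine ⟨m, vv, cc, ?_⟩
    intro x
    have hpiece1 : ∀ j : Fin m, ⟪vv j.castSucc, x⟫ + cc j.castSucc = q j x := by
      intro j
      have hjm : ((j.castSucc : Fin (m+1)) : ℕ) < m := by simpa using j.isLt
      simp only [hvvdef, hccdef]
      rw [dif_pos hjm, dif_pos hjm]
      rfl
    have hpiece2 : ⟪vv (Fin.last m), x⟫ + cc (Fin.last m) = 0 := by
      simp only [hvvdef, hccdef]
      rw [dif_neg (by simp), dif_neg (by simp)]
      simp
    apply le_antisymm
    · simp only [hfdef]
      apply max_le
      · obtain ⟨j, hj⟩ := hGp x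
        rw [hj, ← hpiece1 j]
        exact Finset.le_sup' (fun i => ⟪vv i, x⟫ + cc i) (Finset.mem_univ j.castSucc)
      · rw [← hpiece2]
        exact Finset.le_sup' (fun i => ⟪vv i, x⟫ + cc i) (Finset.mem_univ (Fin.last m))
    · apply Finset.sup'_le
      intro i _
      rcases Nat.lt_or_ge (i : ℕ) m with hi | hi
      · have hieq : i = (⟨(i : ℕ), hi⟩ : Fin m).castSucc := by
          ext; simp
        rw [hieq, hpiece1]
        exact le_trans (hpG _ x) (hGf x)
      · have hieq : i = Fin.last m := by
          ext
          simp only [Fin.val_last]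
          omega
        rw [hieq, hpiece2]
        exact hf0 x
  · -- GStrip
    intro x hx
    simp only [GStrip, Set.mem_setOf_eq]
    intro y hy hdiff
    have hy' : ∀ z, f y + ‖x - y‖ ^ 2 / 2 ≤ f z + ‖x - z‖ ^ 2 / 2 := hy
    obtain ⟨c0, hc0C, hc0d⟩ := mem_thickening_iff.mp hx.1
    have hGx : 0 ≤ G x := hGshell x hx
    rcases lt_or_ge (G y) 0 with hGy | hGy
    · -- G y < 0 : y is in the flat region, can move strictly toward x
      have hfy : f y = 0 := by simp only [hfdef]; exact max_eq_right hGy.le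
      have hxyne : x - y ≠ 0 := by
        intro h0
        rw [sub_eq_zero] at h0
        rw [h0] at hGx
        linarith
      have hdxy : 0 < ‖x - y‖ := norm_pos_iff.mpr hxyne
      set t0 := min 1 (-(G y) / (2 * L * ‖x - y‖)) with ht0def
      have ht0pos : 0 < t0 :=
        lt_min one_pos (div_pos (by linarith) (by positivity))
      have ht0le : t0 ≤ 1 := min_le_left _ _
      set w := y + t0 • (x - y) with hwdef
      have hwy : ‖w - y‖ = t0 * ‖x - y‖ := by
        rw [hwdef, add_sub_cancel_left, norm_smul, Real.norm_eq_abs, abs_of_pos ht0pos]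
      have hGw : G w < 0 := by
        have h1 : G w ≤ G y + L * ‖w - y‖ := hLipG' w y
        have h2 : t0 ≤ -(G y) / (2 * L * ‖x - y‖) := min_le_right _ _
        have h3 : L * ‖w - y‖ ≤ -(G y) / 2 := by
          rw [hwy]
          have hmul := mul_le_mul_of_nonneg_right h2
            (le_of_lt (mul_pos hL hdxy))
          have heq : -(G y) / (2 * L * ‖x - y‖) * (L * ‖x - y‖) = -(G y) / 2 := by
            field_simp
          rw [heq] at hmul
          nlinarith
        nlinarith [h1, h3, hGy]
      have hfw : f w = 0 := by simp only [hfdef]; exact max_eq_right hGw.le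
      have hxw : x - w = (1 - t0) • (x - y) := by
        rw [hwdef]; module
      have hnw : ‖x - w‖ = (1 - t0) * ‖x - y‖ := by
        rw [hxw, norm_smul, Real.norm_eq_abs, abs_of_nonneg (by linarith)]
      have hprox := hy' w
      rw [hfy, hfw, hnw] at hprox
      nlinarith [mul_pos (mul_pos ht0pos (show (0:ℝ) < 2 - t0 by linarith))
        (mul_pos hdxy hdxy)]
    · -- 0 ≤ G y : differentiability forces gradient L u j, distance exactly L
      have hfy : f y = G y := by simp only [hfdef]; exact max_eq_left hGy
      obtain ⟨j, hjy⟩ := hGp y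
      have hD : HasFDerivAt f (fderiv ℝ f y) y := hdiff.hasFDerivAt
      have hpj : HasFDerivAt (fun z => q j z) (innerSL ℝ (L • u j)) y := by
        simp only [hqdef]
        exact ((innerSL ℝ (L • u j)).hasFDerivAt).add_const _
      have hmin1 : IsLocalMin (fun z => f z - q j z) y := by
        apply Filter.Eventually.of_forall
        intro z
        have h1 : q j z ≤ f z := le_trans (hpG j z) (hGf z)
        simp only
        have h2 : f y - q j y = 0 := by rw [hfy, hjy]; ring
        linarith
      have hd1 : fderiv ℝ f y - innerSL ℝ (L • u j) = 0 :=
        hmin1.hasFDerivAt_eq_zero (hD.sub hpj)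
      have hQ := aux_quad_deriv x y
      have hmin2 : IsLocalMin (fun z => f z + ‖x - z‖ ^ 2 / 2) y :=
        Filter.Eventually.of_forall fun z => hy' z
      have hd2 : fderiv ℝ f y + innerSL ℝ (y - x) = 0 :=
        hmin2.hasFDerivAt_eq_zero (hD.add hQ)
      have hvec : ∀ w' : EuclideanSpace ℝ (Fin d), ⟪L • u j, w'⟫ = ⟪x - y, w'⟫ := by
        intro w'
        have e1 := congrArg (fun T : EuclideanSpace ℝ (Fin d) →L[ℝ] ℝ => T w') hd1
        have e2 := congrArg (fun T : EuclideanSpace ℝ (Fin d) →L[ℝ] ℝ => T w') hd2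
        simp only [ContinuousLinearMap.sub_apply, ContinuousLinearMap.add_apply,
          ContinuousLinearMap.zero_apply, innerSL_apply_apply] at e1 e2
        have e3 : ⟪y - x, w'⟫ = ⟪y, w'⟫ - ⟪x, w'⟫ := inner_sub_left _ _ _
        have e4 : ⟪x - y, w'⟫ = ⟪x, w'⟫ - ⟪y, w'⟫ := inner_sub_left _ _ _
        linarith
      have hveq : L • u j = x - y := by
        have h0 : ⟪L • u j - (x - y), L • u j - (x - y)⟫ = 0 := by
          have hv1 := hvec (L • u j - (x - y))
          rw [inner_sub_left]
          linarith [hv1]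
        rwa [inner_self_eq_zero, sub_eq_zero] at h0
      have hnxy : ‖x - y‖ = L := by rw [← hveq, hnormv]
      have hF := hy' c0
      have h1 : f c0 ≤ L * η := hfC c0 hc0C
      have h2 : ‖x - c0‖ < r := by rw [← dist_eq_norm]; exact hc0d
      have h3 : 0 ≤ f y := hf0 y
      have h4 : ‖x - c0‖ ^ 2 ≤ r ^ 2 := by nlinarith [norm_nonneg (x - c0)]
      rw [hnxy] at hF
      rw [hLdef] at hF h1
      rw [hηdef] at h1
      nlinarith [hF, h1, h3, h4, hr, hε, mul_pos hr hε]
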